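/- For every nonzero real m×n matrix A, every ε > 0, and every β ∈ ℝ^m with βᵀ in the range of A, the set S(A,β) is a proper subset of S(A,β,ε). -/

import Mathlib

/-! If `A yᵀ = βᵀ`, then `v ↦ H(v) v^y` lies in `S(A,β,ε)` exactly when
`|H(v₁c^{α₁},…,vₙc^{αₙ}) − H(v)| ≤ ε|H(v)|`, since `(v₁c^{α₁},…,vₙc^{αₙ})^y = v^y c^β`.
The function `H` that is `1` at `(1,…,1)` and `1 + ε` elsewhere satisfies this, but is not
invariant under the scaling, which moves `(1,…,1)` as soon as `A ≠ 0`. -/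

open Matrix

/-- `v^y := ∏ i, v i ^ y i` (real powers). -/
noncomputable def ppow {ι : Type*} [Fintype ι] (v y : ι → ℝ) : ℝ := ∏ i, v i ^ y i

/-- The scaled vector `(v₁c^{α₁}, …, vₙc^{αₙ})`, where `αⱼᵀ` are the columns of `A`
and `c^α := ∏ i, c i ^ α i`. -/
noncomputable def scale {m n : ℕ} (A : Matrix (Fin m) (Fin n) ℝ) (c : Fin m → ℝ)
    (v : Fin n → ℝ) : Fin n → ℝ := fun j => v j * ppow c (fun i => A i j)

/-- `F ∈ S(A,β,ε)`: `|F(v₁c^{α₁},…,vₙc^{αₙ}) − F(v)c^β| ≤ ε|F(v)|c^β` for all positive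
`v ∈ ℝⁿ`, `c ∈ ℝ^m`. `S(A,β) := S(A,β,0)`. -/
def memS {m n : ℕ} (A : Matrix (Fin m) (Fin n) ℝ) (β : Fin m → ℝ) (ε : ℝ)
    (F : (Fin n → ℝ) → ℝ) : Prop :=
  ∀ v : Fin n → ℝ, (∀ j, 0 < v j) → ∀ c : Fin m → ℝ, (∀ i, 0 < c i) →
    |F (scale A c v) - F v * ppow c β| ≤ ε * |F v| * ppow c β

/-- The set `S(A,β,ε)` as a set of functions on `ℝⁿ` (restricted to positive vectors). -/
def SFun {m n : ℕ} (A : Matrix (Fin m) (Fin n) ℝ) (β : Fin m → ℝ) (ε : ℝ) :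
    Set ((Fin n → ℝ) → ℝ) := {F | memS A β ε F}

section ppow

variable {ι : Type*} [Fintype ι]

lemma ppow_pos {v : ι → ℝ} (hv : ∀ i, 0 < v i) (y : ι → ℝ) : 0 < ppow v y :=
  Finset.prod_pos fun i _ => Real.rpow_pos_of_pos (hv i) _

lemma ppow_exp (x y : ι → ℝ) : ppow (fun i => Real.exp (x i)) y = Real.exp (x ⬝ᵥ y) := by
  simp only [ppow, dotProduct, Real.exp_sum, Real.exp_mul]

end ppow

section scale

variable {m n : ℕ} (A : Matrix (Fin m) (Fin n) ℝ)

lemma ppow_scale {c : Fin m → ℝ} {v : Fin n → ℝ} (hc : ∀ i, 0 < c i) (hv : ∀ j, 0 < v j)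
    (y : Fin n → ℝ) : ppow (scale A c v) y = ppow v y * ppow c (A *ᵥ y) := by
  have hcol : ∀ j, ppow c (fun i => A i j) ^ y j = ∏ i, c i ^ (A i j * y j) := fun j => by
    rw [ppow, ← Real.finsetProd_rpow _ _ fun i _ => (Real.rpow_pos_of_pos (hc i) _).le]
    exact Finset.prod_congr rfl fun i _ => (Real.rpow_mul (hc i).le _ _).symm
  calc ppow (scale A c v) y = ∏ j, (v j ^ y j * ∏ i, c i ^ (A i j * y j)) :=
        Finset.prod_congr rfl fun j _ => by
          rw [scale, Real.mul_rpow (hv j).le (ppow_pos hc _).le, hcol]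
    _ = ppow v y * ppow c (A *ᵥ y) := by
        rw [Finset.prod_mul_distrib, Finset.prod_comm]
        refine congrArg _ (Finset.prod_congr rfl fun i _ => ?_)
        rw [mulVec, dotProduct, Real.rpow_sum_of_pos (hc i)]

lemma scale_exp (x : Fin m → ℝ) (v : Fin n → ℝ) :
    scale A (fun i => Real.exp (x i)) v = fun j => v j * Real.exp ((x ᵥ* A) j) := by
  funext j
  rw [scale, ppow_exp]
  rfl

variable {A}

lemma exists_scale_ne (hA : A ≠ 0) {v : Fin n → ℝ} (hv : ∀ j, 0 < v j) :
    ∃ c : Fin m → ℝ, (∀ i, 0 < c i) ∧ scale A c v ≠ v := by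
  obtain ⟨i, j, hij⟩ : ∃ i j, A i j ≠ 0 := by
    by_contra! h
    exact hA (Matrix.ext fun i j => h i j)
  refine ⟨fun k => Real.exp ((Pi.single i 1 : Fin m → ℝ) k), fun _ => Real.exp_pos _,
    fun h => hij ?_⟩
  rw [scale_exp, single_one_vecMul] at h
  have hj : v j * Real.exp (A i j) = v j := congrFun h j
  rw [mul_eq_left₀ (hv j).ne'] at hj
  exact (Real.exp_eq_one_iff _).mp hj

end scale

section memS

variable {m n : ℕ} {A : Matrix (Fin m) (Fin n) ℝ} {β : Fin m → ℝ}

lemma SFun_mono {ε ε' : ℝ} (h : ε ≤ ε') : SFun A β ε ⊆ SFun A β ε' :=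
  fun _ hF v hv c hc => (hF v hv c hc).trans <|
    mul_le_mul_of_nonneg_right (mul_le_mul_of_nonneg_right h (abs_nonneg _)) (ppow_pos hc β).le

lemma memS_mul_ppow_iff {ε : ℝ} {y : Fin n → ℝ} (hy : A *ᵥ y = β) {H : (Fin n → ℝ) → ℝ} :
    memS A β ε (fun v => H v * ppow v y) ↔
      ∀ v : Fin n → ℝ, (∀ j, 0 < v j) → ∀ c : Fin m → ℝ, (∀ i, 0 < c i) →
        |H (scale A c v) - H v| ≤ ε * |H v| := by
  refine forall₄_congr fun v hv c hc => ?_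
  have hpos : 0 < ppow v y * ppow c β := mul_pos (ppow_pos hv y) (ppow_pos hc β)
  have hlhs : H (scale A c v) * ppow (scale A c v) y - H v * ppow v y * ppow c β
      = (H (scale A c v) - H v) * (ppow v y * ppow c β) := by
    rw [ppow_scale A hc hv, hy]
    ring
  rw [hlhs, abs_mul, abs_of_pos hpos, abs_mul, abs_of_pos (ppow_pos hv y),
    show ε * (|H v| * ppow v y) * ppow c β = ε * |H v| * (ppow v y * ppow c β) by ring]
  exact mul_le_mul_iff_left₀ hpos

end memS

lemma abs_sub_le_of_mem_Icc {α : Type*} {H : α → ℝ} {a ε : ℝ} (hε : 0 ≤ ε)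
    (hH : ∀ v, H v ∈ Set.Icc a ((1 + ε) * a)) (v w : α) : |H w - H v| ≤ ε * |H v| :=
  calc |H w - H v| ≤ (1 + ε) * a - a :=
        abs_sub_le_of_le_of_le (hH w).1 (hH w).2 (hH v).1 (hH v).2
    _ = ε * a := by ring
    _ ≤ ε * |H v| := mul_le_mul_of_nonneg_left ((hH v).1.trans (le_abs_self _)) hε

/-- For every nonzero `A`, every `ε > 0`, and every `β` with `βᵀ` in the range of
`A`, `S(A,β)` is a proper subset of `S(A,β,ε)`. -/
theorem S_proper_subset (m n : ℕ) (A : Matrix (Fin m) (Fin n) ℝ) (hA : A ≠ 0)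
    (ε : ℝ) (hε : 0 < ε) (β : Fin m → ℝ) (hβ : ∃ y : Fin n → ℝ, A.mulVec y = β) :
    SFun A β 0 ⊂ SFun A β ε := by
  obtain ⟨y, hy⟩ := hβ
  let H : (Fin n → ℝ) → ℝ := fun v => if v = 1 then 1 else 1 + ε
  have hH : ∀ v, H v ∈ Set.Icc 1 ((1 + ε) * 1) := fun v => by
    by_cases hv : v = 1 <;> simp [H, hv, hε.le]
  refine (Set.ssubset_iff_of_subset (SFun_mono hε.le)).mpr
    ⟨fun v => H v * ppow v y,
      (memS_mul_ppow_iff hy).mpr fun v _ c _ => abs_sub_le_of_mem_Icc hε.le hH v _, ?_⟩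
  intro hF
  obtain ⟨c, hc, hne⟩ := exists_scale_ne hA (v := 1) fun _ => one_pos
  have hinv := (memS_mul_ppow_iff hy).mp hF 1 (fun _ => one_pos) c hc
  simp only [H, hne, if_false, if_true, zero_mul, abs_nonpos_iff] at hinv
  linarith
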